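/- arXiv:2502.10091 — 3 statements merged into one kernel-verified Lean document; each statement's English description precedes it below -/
import Mathlib

section
/- Let ν be a σ-finite measure on a measurable space α, let f₀, f₁ : α → ℝ≥0∞ be measurable, and let μ₀ = ν.withDensity f₀ and μ₁ = ν.withDensity f₁ be the two conditional distributions. Let π₀, π₁ ∈ ℝ≥0∞ be prior weights. Define the likelihood-ratio acceptance region D* = {x | π₁·f₁(x) > π₀·f₀(x)}. Then for every measurable set D ⊆ α, the Bayes error of D is at least that of D*: π₀·μ₀(D) + π₁·μ₁(Dᶜ) ≥ π₀·μ₀(D*) + π₁·μ₁(D*ᶜ). (The likelihood-ratio test minimizes the error probability in binary hypothesis testing, which establishes the optimality claim in Proposition 1.) -/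
open MeasureTheory
open scoped ENNReal

/-- The likelihood-ratio test minimizes the Bayes error in binary hypothesis testing
(optimality claim underlying Proposition 1). -/
theorem lrt_minimizes_bayes_error {α : Type*} [MeasurableSpace α]
    (ν : Measure α) [SigmaFinite ν]
    (f0 f1 : α → ℝ≥0∞) (hf0 : Measurable f0) (hf1 : Measurable f1)
    (μ0 μ1 : Measure α) (hμ0 : μ0 = ν.withDensity f0) (hμ1 : μ1 = ν.withDensity f1)
    (π0 π1 : ℝ≥0∞)
    (Dstar : Set α) (hDstar : Dstar = {x | π0 * f0 x < π1 * f1 x}) :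
    ∀ D : Set α, MeasurableSet D →
      π0 * μ0 Dstar + π1 * μ1 Dstarᶜ ≤ π0 * μ0 D + π1 * μ1 Dᶜ := by
  intro D hD
  subst hμ0 hμ1
  have hDs : MeasurableSet Dstar := by
    rw [hDstar]
    exact measurableSet_lt ((hf0.const_mul π0)) ((hf1.const_mul π1))
  -- error of a measurable set as a lintegral of an indicator sum
  have key : ∀ (S : Set α), MeasurableSet S →
      π0 * (ν.withDensity f0) S + π1 * (ν.withDensity f1) Sᶜ
        = ∫⁻ x, (S.indicator (fun x => π0 * f0 x) x
            + Sᶜ.indicator (fun x => π1 * f1 x) x) ∂ν := by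
    intro S hS
    rw [withDensity_apply _ hS, withDensity_apply _ hS.compl,
      ← lintegral_const_mul _ hf0, ← lintegral_const_mul _ hf1,
      ← lintegral_indicator hS _, ← lintegral_indicator hS.compl _,
      ← lintegral_add_left ((hf0.const_mul π0).indicator hS)]
  rw [key D hD, key Dstar hDs]
  refine lintegral_mono fun x => ?_
  by_cases hx : x ∈ Dstar
  · have hlt : π0 * f0 x < π1 * f1 x := by rw [hDstar] at hx; exact hx
    simp only [Set.indicator_of_mem hx, Set.indicator_of_notMem (by simp [hx] : x ∉ Dstarᶜ),
      add_zero]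
    by_cases hxD : x ∈ D
    · simp [Set.indicator_of_mem hxD, Set.indicator_of_notMem (by simp [hxD] : x ∉ Dᶜ)]
    · simp only [Set.indicator_of_notMem hxD, Set.indicator_of_mem (by simp [hxD] : x ∈ Dᶜ),
        zero_add]
      exact hlt.le
  · have hge : π1 * f1 x ≤ π0 * f0 x := by
      rw [hDstar] at hx; exact not_lt.mp hx
    simp only [Set.indicator_of_notMem hx, Set.indicator_of_mem (by simpa using hx : x ∈ Dstarᶜ),
      zero_add]
    by_cases hxD : x ∈ D
    · simp only [Set.indicator_of_mem hxD, Set.indicator_of_notMem (by simp [hxD] : x ∉ Dᶜ),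
        add_zero]
      exact hge
    · simp [Set.indicator_of_notMem hxD, Set.indicator_of_mem (by simp [hxD] : x ∈ Dᶜ)]
end

section
/- Let σ² > 0 and let φ ∈ ℂ with φ ≠ 0. Model a circularly symmetric complex Gaussian ω with variance σ² as the product measure μ = (gaussianReal 0 (σ²/2)) × (gaussianReal 0 (σ²/2)) on ℝ × ℝ. Then μ {(x, y) | φ.re·x + φ.im·y > |φ|²/2} = Q(√(|φ|²/(2σ²))), where Q(t) = gaussianReal 0 1 {s | s > t}. (Equation (19): each conditional error probability of the equal-prior LoS decision rule equals Q(√(|φ|²/(2σ_ω²))).) -/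
open MeasureTheory ProbabilityTheory Real
open scoped NNReal ENNReal

-- product of two centered gaussians as density wrt volume on ℝ×ℝ
lemma gauss_prod_withDensity (v : ℝ≥0) (hv : v ≠ 0) :
    (gaussianReal 0 v).prod (gaussianReal 0 v)
      = (volume : Measure (ℝ × ℝ)).withDensity
          (fun p => gaussianPDF 0 v p.1 * gaussianPDF 0 v p.2) := by
  refine Measure.prod_eq fun s t hs ht => ?_
  rw [withDensity_apply _ (hs.prod ht), Measure.volume_eq_prod, ← Measure.prod_restrict,
    lintegral_prod_mul (measurable_gaussianPDF 0 v).aemeasurable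
      (measurable_gaussianPDF 0 v).aemeasurable,
    ← withDensity_apply _ hs, ← withDensity_apply _ ht,
    ← gaussianReal_of_var_ne_zero 0 hv]

lemma gauss_pdf_rot (v : ℝ≥0) (z w : ℂ) (h : ‖z‖ = ‖w‖) :
    gaussianPDF 0 v z.re * gaussianPDF 0 v z.im
      = gaussianPDF 0 v w.re * gaussianPDF 0 v w.im := by
  have key : ∀ u : ℂ, gaussianPDF 0 v u.re * gaussianPDF 0 v u.im
      = ENNReal.ofReal (((√(2 * π * v))⁻¹)^2 * rexp (- ‖u‖^2 / (2 * v))) := by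
    intro u
    rw [gaussianPDF, gaussianPDF, ← ENNReal.ofReal_mul (gaussianPDFReal_nonneg _ _ _)]
    congr 1
    simp only [gaussianPDFReal, sub_zero]
    have habs : ‖u‖ ^ 2 = u.re ^ 2 + u.im ^ 2 := by
      rw [Complex.sq_norm, Complex.normSq_apply]; ring
    rw [habs,
      show -(u.re ^ 2 + u.im ^ 2) / (2 * (v:ℝ)) = -u.re^2/(2*(v:ℝ)) + -u.im^2/(2*(v:ℝ)) by ring,
      Real.exp_add]
    ring
  rw [key, key, h]

/-- Equation (19): each conditional error probability of the equal-prior LoS decision rule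
equals `Q(√(|φ|²/(2σ²)))`, where `Q` is the standard Gaussian tail function. -/
theorem conditional_error_eq_Q (σ2 : ℝ≥0) (hσ : 0 < σ2) (φ : ℂ) (hφ : φ ≠ 0) :
    ((gaussianReal 0 (σ2 / 2)).prod (gaussianReal 0 (σ2 / 2)))
        {q : ℝ × ℝ | φ.re * q.1 + φ.im * q.2 > ‖φ‖ ^ 2 / 2}
      = gaussianReal 0 1
          {s : ℝ | s > Real.sqrt (‖φ‖ ^ 2 / (2 * (σ2 : ℝ)))} := by
  set v : ℝ≥0 := σ2 / 2 with hv_def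
  have hσ0 : (σ2 : ℝ≥0) ≠ 0 := hσ.ne'
  have h2 : v ≠ 0 := by
    simp [hv_def, div_eq_zero_iff, hσ0]
  have hvR : (0:ℝ) < (v:ℝ) := by
    exact_mod_cast h2.bot_lt
  set r : ℝ := ‖φ‖ with hr_def
  have hr : 0 < r := norm_pos_iff.mpr hφ
  set S : Set (ℝ × ℝ) := {q : ℝ × ℝ | φ.re * q.1 + φ.im * q.2 > r ^ 2 / 2} with hS_def
  have hS : MeasurableSet S := by
    apply measurableSet_lt measurable_const
    fun_prop
  set G : ℝ × ℝ → ℝ≥0∞ := fun p => gaussianPDF 0 v p.1 * gaussianPDF 0 v p.2 with hG_def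
  have hGm : Measurable G :=
    ((measurable_gaussianPDF 0 v).comp measurable_fst).mul
      ((measurable_gaussianPDF 0 v).comp measurable_snd)
  -- the rotation
  have hu_mem : φ / (r : ℂ) ∈ Submonoid.unitSphere ℂ := by
    show φ / (r : ℂ) ∈ Metric.sphere (0:ℂ) 1
    rw [mem_sphere_zero_iff_norm]
    rw [norm_div]
    simp only [Complex.norm_real, Real.norm_eq_abs, abs_of_pos hr, ← hr_def]
    exact div_self hr.ne'
  set u : Circle := ⟨φ / (r : ℂ), hu_mem⟩ with hu_def
  set R : ℂ ≃ₗᵢ[ℝ] ℂ := rotation u with hR_def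
  have hR : MeasurePreserving R volume volume := R.measurePreserving
  have he := Complex.volume_preserving_equiv_real_prod
  set e := Complex.measurableEquivRealProd with he_def
  have hrect : MeasurableSet ({x : ℝ | x > r / 2} ×ˢ (Set.univ : Set ℝ)) :=
    (measurableSet_lt measurable_const measurable_id).prod MeasurableSet.univ
  -- step 1: reduce to a one-dimensional gaussian
  have hμS : ((gaussianReal 0 v).prod (gaussianReal 0 v)) S
      = gaussianReal 0 v {x : ℝ | x > r / 2} := by
    rw [gauss_prod_withDensity v h2, withDensity_apply _ hS,
      ← he.setLIntegral_comp_preimage hS hGm]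
    have hT : MeasurableSet (e ⁻¹' S) := e.measurable hS
    rw [← hR.setLIntegral_comp_preimage (f := fun z => G (e z)) hT (hGm.comp e.measurable)]
    have hset : (⇑R) ⁻¹' (e ⁻¹' S) = e ⁻¹' ({x : ℝ | x > r / 2} ×ˢ (Set.univ : Set ℝ)) := by
      ext w
      simp only [Set.mem_preimage, hS_def, Set.mem_setOf_eq, Set.mem_prod, Set.mem_univ,
        and_true, Complex.measurableEquivRealProd_apply, he_def]
      have hRw : (R w : ℂ) = (φ / (r : ℂ)) * w := by
        rw [hR_def, rotation_apply, hu_def]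
      have hre : φ.re * (R w).re + φ.im * (R w).im = r * w.re := by
        have h1 : φ.re * (R w).re + φ.im * (R w).im = ((starRingEnd ℂ) φ * R w).re := by
          simp [Complex.mul_re]
        rw [h1, hRw]
        have hcc : (starRingEnd ℂ) φ * φ = ((r : ℂ))^2 := by
          rw [mul_comm, Complex.mul_conj, Complex.normSq_eq_norm_sq, ← hr_def]
          push_cast
          ring
        have hrC : ((r : ℂ)) ≠ 0 := by exact_mod_cast hr.ne'
        have h2 : (starRingEnd ℂ) φ * (φ / (r:ℂ) * w) = ((r:ℂ)) * w := by
          calc (starRingEnd ℂ) φ * (φ / (r:ℂ) * w)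
              = ((starRingEnd ℂ) φ * φ) * w / (r:ℂ) := by ring
            _ = ((r:ℂ))^2 * w / (r:ℂ) := by rw [hcc]
            _ = ((r:ℂ)) * w := by field_simp
        rw [h2]
        simp [Complex.mul_re]
      rw [hre]
      constructor
      · intro h
        nlinarith
      · intro h
        nlinarith
    rw [hset]
    have hinv : ∀ w : ℂ, G (e (R w)) = G (e w) := by
      intro w
      have habs : ‖(R w : ℂ)‖ = ‖w‖ := by
        rw [hR_def, rotation_apply, hu_def]
        simp only [norm_mul, norm_div, Complex.norm_real, Real.norm_eq_abs, abs_of_pos hr]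
        rw [← hr_def, div_self hr.ne', one_mul]
      exact gauss_pdf_rot v (R w) w habs
    calc ∫⁻ w in e ⁻¹' ({x : ℝ | x > r / 2} ×ˢ Set.univ), G (e (R w)) ∂volume
        = ∫⁻ w in e ⁻¹' ({x : ℝ | x > r / 2} ×ˢ Set.univ), G (e w) ∂volume :=
          setLIntegral_congr_fun (e.measurable hrect) (fun w _ => hinv w)
      _ = ∫⁻ p in {x : ℝ | x > r / 2} ×ˢ Set.univ, G p ∂volume :=
          he.setLIntegral_comp_preimage hrect hGm
      _ = ((gaussianReal 0 v).prod (gaussianReal 0 v)) ({x : ℝ | x > r / 2} ×ˢ Set.univ) := by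
          rw [gauss_prod_withDensity v h2, withDensity_apply _ hrect]
      _ = gaussianReal 0 v {x : ℝ | x > r / 2} := by
          rw [Measure.prod_prod, measure_univ, mul_one]
  rw [hμS]
  -- step 2: rescale the one-dimensional gaussian
  have hmap : (gaussianReal (0:ℝ) 1).map (fun x => Real.sqrt v * x) = gaussianReal 0 v := by
    have h := gaussianReal_map_const_mul (μ := (0:ℝ)) (v := 1) (Real.sqrt (v:ℝ))
    have : (fun x : ℝ => Real.sqrt (v:ℝ) * x) = (Real.sqrt (v:ℝ) * ·) := rfl
    rw [this, h, mul_zero]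
    congr 1
    rw [mul_one]
    ext
    simp [Real.sq_sqrt hvR.le]
  have hmeas : Measurable (fun x : ℝ => Real.sqrt (v:ℝ) * x) := by fun_prop
  have hsetm : MeasurableSet {x : ℝ | x > r/2} := measurableSet_Ioi
  rw [← hmap, Measure.map_apply hmeas hsetm]
  congr 1
  ext t
  simp only [Set.mem_preimage, Set.mem_setOf_eq]
  have hsv : 0 < Real.sqrt (v:ℝ) := Real.sqrt_pos.2 hvR
  have hkey : r / 2 = Real.sqrt (r ^ 2 / (2 * (σ2:ℝ))) * Real.sqrt (v:ℝ) := by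
    rw [← Real.sqrt_mul (by positivity)]
    have hveq : (v:ℝ) = (σ2:ℝ) / 2 := by
      rw [hv_def]; push_cast; ring
    rw [hveq]
    rw [show r ^ 2 / (2 * (σ2:ℝ)) * ((σ2:ℝ) / 2) = (r/2)^2 by field_simp]
    rw [Real.sqrt_sq (by positivity)]
  constructor
  · intro h
    rw [hkey] at h
    exact lt_of_mul_lt_mul_right (by linarith [h]) hsv.le
  · intro h
    rw [hkey]
    calc Real.sqrt (r^2/(2*(σ2:ℝ))) * Real.sqrt (v:ℝ) < t * Real.sqrt (v:ℝ) := by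
          exact mul_lt_mul_of_pos_right h hsv
      _ = Real.sqrt (v:ℝ) * t := mul_comm _ _
end

section
/- Let M ≥ 1, let K > 0 and σ_v² ≥ 0 be real numbers, and let p : Fin M → ℝ with p m > 0 for all m. For each m, model the noise ω_m as the product measure μ_m = (gaussianReal 0 (σ_m²/2)) × (gaussianReal 0 (σ_m²/2)) on ℝ × ℝ with σ_m² = p m/(K + 1) + σ_v², and let φ_m ∈ ℂ satisfy |φ_m|² = K·(p m)/(K + 1). Then the average error probability of the equal-prior LoS decision rule, ℰ = (1/M)·Σ_{m} μ_m {(x, y) | (φ_m).re·x + (φ_m).im·y > |φ_m|²/2}, equals (1/M)·Σ_{m} Q(√(K·(p m)/(2·(p m) + 2·(K + 1)·σ_v²))), where Q(t) = gaussianReal 0 1 {s | s > t}. (Corollary 2: the error probability of LoS state estimation.) -/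
open MeasureTheory ProbabilityTheory
open scoped NNReal ENNReal

lemma pdfReal_mul_eq (V : ℝ≥0) {x y u w : ℝ} (h : u ^ 2 + w ^ 2 = x ^ 2 + y ^ 2) :
    gaussianPDFReal 0 V u * gaussianPDFReal 0 V w
      = gaussianPDFReal 0 V x * gaussianPDFReal 0 V y := by
  simp only [gaussianPDFReal, sub_zero]
  rw [mul_mul_mul_comm, ← Real.exp_add, mul_mul_mul_comm, ← Real.exp_add]
  congr 1
  rw [← add_div, ← add_div]
  have h2 : -u ^ 2 + -w ^ 2 = -x ^ 2 + -y ^ 2 := by linarith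
  rw [h2]

lemma halfplane_measure (V : ℝ≥0) (hV : V ≠ 0) (a b c : ℝ) (hab : 0 < a ^ 2 + b ^ 2) :
    ((gaussianReal 0 V).prod (gaussianReal 0 V)) {q : ℝ × ℝ | a * q.1 + b * q.2 > c}
      = gaussianReal 0 V {x : ℝ | x > c / Real.sqrt (a ^ 2 + b ^ 2)} := by
  set r : ℝ := Real.sqrt (a ^ 2 + b ^ 2) with hrdef
  have hr : 0 < r := Real.sqrt_pos.2 hab
  have hr2 : r ^ 2 = a ^ 2 + b ^ 2 := Real.sq_sqrt hab.le
  set L : (ℝ × ℝ) →ₗ[ℝ] (ℝ × ℝ) :=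
    Matrix.toLin (Module.Basis.finTwoProd ℝ) (Module.Basis.finTwoProd ℝ) !![a / r, -(b / r); b / r, a / r]
    with hLdef
  have hLapp : ∀ q : ℝ × ℝ,
      L q = (a / r * q.1 + -(b / r) * q.2, b / r * q.1 + a / r * q.2) := fun q ↦
    Matrix.toLin_finTwoProd_apply _ _ _ _ q
  have hdet : LinearMap.det L = 1 := by
    rw [hLdef, LinearMap.det_toLin, Matrix.det_fin_two_of]
    field_simp
    linear_combination -hr2
  have hLmeas : Measurable L := (LinearMap.continuous_of_finiteDimensional L).measurable
  have hmap : Measure.map L (volume.prod volume) = volume.prod volume := by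
    have := Measure.map_linearMap_addHaar_eq_smul_addHaar (μ := volume.prod volume)
      (f := L) (by rw [hdet]; norm_num)
    simpa [hdet] using this
  have hmp : MeasurePreserving L (volume.prod volume) (volume.prod volume) := ⟨hLmeas, hmap⟩
  set D : ℝ × ℝ → ℝ≥0∞ := fun q ↦ gaussianPDF 0 V q.1 * gaussianPDF 0 V q.2 with hDdef
  have hDmeas : Measurable D :=
    ((measurable_gaussianPDF 0 V).comp measurable_fst).mul
      ((measurable_gaussianPDF 0 V).comp measurable_snd)
  have hprod : (gaussianReal 0 V).prod (gaussianReal 0 V)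
      = (volume.prod volume).withDensity D := by
    refine Measure.prod_eq fun s t hs ht ↦ ?_
    rw [withDensity_apply _ (hs.prod ht), ← Measure.prod_restrict,
      lintegral_prod_mul (measurable_gaussianPDF 0 V).aemeasurable
        (measurable_gaussianPDF 0 V).aemeasurable,
      gaussianReal_apply 0 hV s, gaussianReal_apply 0 hV t]
  have hS : MeasurableSet {q : ℝ × ℝ | a * q.1 + b * q.2 > c} :=
    measurableSet_lt measurable_const (by fun_prop)
  have hDL : ∀ q : ℝ × ℝ, D (L q) = D q := by
    intro q
    rw [hLapp q]
    simp only [hDdef, gaussianPDF]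
    rw [← ENNReal.ofReal_mul (gaussianPDFReal_nonneg _ _ _),
      ← ENNReal.ofReal_mul (gaussianPDFReal_nonneg _ _ _)]
    congr 1
    refine pdfReal_mul_eq V ?_
    field_simp
    linear_combination (-(q.1 ^ 2 + q.2 ^ 2)) * hr2
  have hpre : L ⁻¹' {q : ℝ × ℝ | a * q.1 + b * q.2 > c}
      = {x : ℝ | x > c / r} ×ˢ (Set.univ : Set ℝ) := by
    ext q
    have hval : a * (a / r * q.1 + -(b / r) * q.2) + b * (b / r * q.1 + a / r * q.2)
        = r * q.1 := by
      field_simp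
      linear_combination (-q.1) * hr2
    simp only [Set.mem_preimage, Set.mem_setOf_eq, hLapp q, Set.mem_prod, Set.mem_univ,
      and_true, hval, gt_iff_lt]
    rw [div_lt_iff₀ hr]
    constructor <;> intro h <;> linarith [h]
  calc ((gaussianReal 0 V).prod (gaussianReal 0 V)) {q : ℝ × ℝ | a * q.1 + b * q.2 > c}
      = ∫⁻ q in {q : ℝ × ℝ | a * q.1 + b * q.2 > c}, D q ∂(volume.prod volume) := by
        rw [hprod, withDensity_apply _ hS]
    _ = ∫⁻ q in L ⁻¹' {q : ℝ × ℝ | a * q.1 + b * q.2 > c}, D (L q) ∂(volume.prod volume) :=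
        (hmp.setLIntegral_comp_preimage hS hDmeas).symm
    _ = ∫⁻ q in L ⁻¹' {q : ℝ × ℝ | a * q.1 + b * q.2 > c}, D q ∂(volume.prod volume) := by
        simp_rw [hDL]
    _ = ((gaussianReal 0 V).prod (gaussianReal 0 V))
          (L ⁻¹' {q : ℝ × ℝ | a * q.1 + b * q.2 > c}) := by
        rw [hprod, withDensity_apply _ (hS.preimage hLmeas)]
    _ = gaussianReal 0 V {x : ℝ | x > c / r} := by
        rw [hpre, Measure.prod_prod, measure_univ, mul_one]

lemma gauss_standardize (V : ℝ≥0) (hV : V ≠ 0) (d : ℝ) :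
    gaussianReal 0 V {x : ℝ | x > d}
      = gaussianReal 0 1 {t : ℝ | t > d / Real.sqrt V} := by
  have hVpos : (0 : ℝ) < V := by positivity
  have hs : (0 : ℝ) < Real.sqrt V := Real.sqrt_pos.2 hVpos
  have hvar : (NNReal.mk (((Real.sqrt (V : ℝ))⁻¹) ^ 2) (sq_nonneg _)) = V⁻¹ := by
    apply NNReal.coe_injective
    rw [NNReal.coe_inv, NNReal.coe_mk, inv_pow, Real.sq_sqrt hVpos.le]
  have hmap := gaussianReal_map_const_mul (μ := 0) (v := V) ((Real.sqrt V)⁻¹)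
  rw [mul_zero, hvar, inv_mul_cancel₀ hV] at hmap
  have hmeas : MeasurableSet {t : ℝ | t > d / Real.sqrt V} :=
    measurableSet_lt measurable_const measurable_id
  rw [← hmap, Measure.map_apply (by fun_prop) hmeas]
  congr 1
  ext x
  simp only [Set.mem_preimage, Set.mem_setOf_eq, gt_iff_lt, inv_mul_eq_div]
  exact (div_lt_div_iff_of_pos_right hs).symm

/-- Corollary 2: the average error probability of the equal-prior LoS state estimation rule
over `M` links equals `(1/M)·Σ_m Q(√(K·p_m/(2·p_m + 2·(K+1)·σ_v²)))`. -/
theorem average_error_probability (M : ℕ) (hM : 1 ≤ M) (K : ℝ) (hK : 0 < K)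
    (sv : ℝ) (hsv : 0 ≤ sv) (p : Fin M → ℝ) (hp : ∀ m, 0 < p m)
    (φ : Fin M → ℂ) (hφ : ∀ m, ‖φ m‖ ^ 2 = K * p m / (K + 1)) :
    (M : ℝ≥0∞)⁻¹ * ∑ m : Fin M,
        ((gaussianReal 0 ((p m / (K + 1) + sv) / 2).toNNReal).prod
            (gaussianReal 0 ((p m / (K + 1) + sv) / 2).toNNReal))
          {q : ℝ × ℝ | (φ m).re * q.1 + (φ m).im * q.2 > ‖φ m‖ ^ 2 / 2}
      = (M : ℝ≥0∞)⁻¹ * ∑ m : Fin M,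
          gaussianReal 0 1
            {t : ℝ | t > Real.sqrt (K * p m / (2 * p m + 2 * (K + 1) * sv))} := by
  have hK1 : (0 : ℝ) < K + 1 := by linarith
  congr 1
  refine Finset.sum_congr rfl fun m _ ↦ ?_
  set s : ℝ := (p m / (K + 1) + sv) / 2 with hsdef
  have hs : 0 < s := by
    have := hp m
    have : 0 < p m / (K + 1) := div_pos (hp m) hK1
    positivity
  have hV : s.toNNReal ≠ 0 := (Real.toNNReal_pos.2 hs).ne'
  have hVs : ((s.toNNReal : ℝ≥0) : ℝ) = s := Real.coe_toNNReal _ hs.le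
  set A : ℝ := K * p m / (K + 1) with hAdef
  have hA : 0 < A := div_pos (mul_pos hK (hp m)) hK1
  have hab : (φ m).re ^ 2 + (φ m).im ^ 2 = A := by
    rw [hAdef, ← hφ m, Complex.sq_norm, Complex.normSq_apply]; ring
  have hab' : 0 < (φ m).re ^ 2 + (φ m).im ^ 2 := hab ▸ hA
  rw [halfplane_measure _ hV _ _ _ hab', gauss_standardize _ hV]
  have h1 : A / 2 / Real.sqrt A = Real.sqrt A / 2 := by
    rw [div_div, mul_comm, ← div_div, Real.div_sqrt]
  have h2 : Real.sqrt A / 2 / Real.sqrt s = Real.sqrt (A / (4 * s)) := by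
    rw [Real.sqrt_div hA.le, show (4 : ℝ) * s = 2 ^ 2 * s by ring,
      Real.sqrt_mul (by norm_num : (0:ℝ) ≤ 2 ^ 2), Real.sqrt_sq (by norm_num : (0:ℝ) ≤ 2),
      div_div]
  have hden : (0:ℝ) < 2 * p m + 2 * (K + 1) * sv := by
    have := hp m
    have : 0 < 2 * p m := by linarith
    nlinarith [mul_nonneg hK1.le hsv]
  have h3 : A / (4 * s) = K * p m / (2 * p m + 2 * (K + 1) * sv) := by
    rw [hAdef, hsdef]
    rw [div_eq_div_iff (by positivity) hden.ne']
    field_simp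
    ring
  have harg : ‖φ m‖ ^ 2 / 2 / Real.sqrt ((φ m).re ^ 2 + (φ m).im ^ 2) /
      Real.sqrt ((s.toNNReal : ℝ≥0) : ℝ)
      = Real.sqrt (K * p m / (2 * p m + 2 * (K + 1) * sv)) := by
    rw [hVs, hab, hφ m, h1, h2, h3]
  rw [harg]
end
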